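/- arXiv:1712.02249 — 4 statements merged into one kernel-verified Lean document; each statement's English description precedes it below -/
import Mathlib

section
/- (Boundedness of the ALM multipliers.) Let $A_2 \in \mathbb{R}^{m \times n}$, $Q \in \mathbb{R}^{m \times k}$, $\mu_k > 0$, $S^{(k+1)} \in \mathbb{R}^{k \times n}$, $Y^{(k)} \in \mathbb{R}^{m \times n}$. Suppose $F_2^{(k+1)}$ minimizes over $F \in \mathbb{R}^{m \times n}$ the function $F \mapsto \|F\|_1 + \frac{\mu_k}{2}\|A_2 - Q S^{(k+1)} - F + \frac{1}{\mu_k} Y^{(k)}\|_F^2$, and define $Y^{(k+1)} = Y^{(k)} + \mu_k (A_2 - Q S^{(k+1)} - F_2^{(k+1)})$. Then $Y^{(k+1)}$ is a subgradient of the entrywise $\ell_1$ norm at $F_2^{(k+1)}$, and consequently $\|Y^{(k+1)}\|_\infty \le 1$. In particular, the sequence of multipliers $\{Y^{(k)}\}_{k \ge 1}$ produced by the ALM algorithm is bounded. -/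
/-- Entrywise ℓ1 norm of a matrix. -/
noncomputable def matrixL1Norm {m n : ℕ} (M : Matrix (Fin m) (Fin n) ℝ) : ℝ :=
  ∑ i, ∑ j, |M i j|

/-- Trace inner product of matrices. -/
noncomputable def matrixInner {m n : ℕ} (Y X : Matrix (Fin m) (Fin n) ℝ) : ℝ :=
  ∑ i, ∑ j, Y i j * X i j

/-- Boundedness of the ALM multipliers: if each `F₂⁽ᵏ⁺¹⁾` minimizes
`F ↦ ‖F‖₁ + (μₖ/2)‖A₂ - Q S⁽ᵏ⁺¹⁾ - F + (1/μₖ) Y⁽ᵏ⁾‖_F²` and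
`Y⁽ᵏ⁺¹⁾ = Y⁽ᵏ⁾ + μₖ (A₂ - Q S⁽ᵏ⁺¹⁾ - F₂⁽ᵏ⁺¹⁾)`, then each `Y⁽ᵏ⁺¹⁾` is a
subgradient of the entrywise ℓ1 norm at `F₂⁽ᵏ⁺¹⁾` and hence `‖Y⁽ᵏ⁺¹⁾‖_∞ ≤ 1`;
in particular the multiplier sequence `{Y⁽ᵏ⁾}_{k ≥ 1}` is bounded. -/
theorem alm_multipliers_bounded (m n p : ℕ)
    (A₂ : Matrix (Fin m) (Fin n) ℝ) (Q : Matrix (Fin m) (Fin p) ℝ)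
    (S : ℕ → Matrix (Fin p) (Fin n) ℝ)
    (F₂ Y : ℕ → Matrix (Fin m) (Fin n) ℝ)
    (μ : ℕ → ℝ) (hμ : ∀ k, 0 < μ k)
    (hF : ∀ k, ∀ F : Matrix (Fin m) (Fin n) ℝ,
      matrixL1Norm (F₂ (k + 1)) +
          μ k / 2 * ∑ i, ∑ j,
            ((A₂ - Q * S (k + 1) - F₂ (k + 1) + (μ k)⁻¹ • Y k) i j) ^ 2 ≤
        matrixL1Norm F +
          μ k / 2 * ∑ i, ∑ j,
            ((A₂ - Q * S (k + 1) - F + (μ k)⁻¹ • Y k) i j) ^ 2)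
    (hYupd : ∀ k, Y (k + 1) = Y k + μ k • (A₂ - Q * S (k + 1) - F₂ (k + 1))) :
    ∀ k : ℕ,
      (∀ G : Matrix (Fin m) (Fin n) ℝ,
        matrixL1Norm G ≥
          matrixL1Norm (F₂ (k + 1)) + matrixInner (Y (k + 1)) (G - F₂ (k + 1))) ∧
      ∀ i j, |Y (k + 1) i j| ≤ 1 := by
  intro k
  set Fs := F₂ (k + 1) with hFs
  set C := A₂ - Q * S (k + 1) with hC
  set D := C - Fs + (μ k)⁻¹ • Y k with hD
  have hμk := hμ k
  have hY1 : Y (k + 1) = μ k • D := by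
    rw [hYupd k, hD, smul_add, smul_smul, mul_inv_cancel₀ hμk.ne', one_smul, add_comm]
  -- subgradient claim
  have subgrad : ∀ G : Matrix (Fin m) (Fin n) ℝ,
      matrixL1Norm G ≥ matrixL1Norm Fs + matrixInner (Y (k + 1)) (G - Fs) := by
    intro G
    set d := G - Fs with hd
    rw [ge_iff_le, add_comm, ← le_sub_iff_add_le]
    apply le_of_forall_pos_le_add
    intro ε hε
    set Sd := ∑ i, ∑ j, (d i j) ^ 2 with hSd
    have hSd0 : 0 ≤ Sd := Finset.sum_nonneg fun i _ => Finset.sum_nonneg fun j _ => sq_nonneg _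
    set t := min 1 (2 * ε / (μ k * (Sd + 1))) with ht
    have ht0 : 0 < t := lt_min one_pos (by positivity)
    have ht1 : t ≤ 1 := min_le_left _ _
    -- key instantiation
    have key := hF k (Fs + t • d)
    -- rewrite the sums
    have hexp : ∀ i j, ((C - (Fs + t • d) + (μ k)⁻¹ • Y k) i j) = D i j - t * d i j := by
      intro i j
      simp [hD, Matrix.sub_apply, Matrix.add_apply, Matrix.smul_apply, smul_eq_mul]
      ring
    have hsum : ∑ i, ∑ j, ((C - (Fs + t • d) + (μ k)⁻¹ • Y k) i j) ^ 2
        = (∑ i, ∑ j, (D i j) ^ 2) - 2 * t * (∑ i, ∑ j, D i j * d i j) + t ^ 2 * Sd := by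
      simp only [hexp, sub_sq]
      rw [hSd]
      simp only [Finset.sum_add_distrib, Finset.sum_sub_distrib, Finset.mul_sum]
      congr 1
      · congr 1
        apply Finset.sum_congr rfl; intro i _
        apply Finset.sum_congr rfl; intro j _
        ring
      · apply Finset.sum_congr rfl; intro i _
        apply Finset.sum_congr rfl; intro j _
        ring
    -- convexity of L1
    have hconv : matrixL1Norm (Fs + t • d) ≤ matrixL1Norm Fs + t * (matrixL1Norm G - matrixL1Norm Fs) := by
      have : ∀ i j, |(Fs + t • d) i j| ≤ |Fs i j| + t * (|G i j| - |Fs i j|) := by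
        intro i j
        have : (Fs + t • d) i j = (1 - t) * Fs i j + t * G i j := by
          simp [hd, Matrix.add_apply, Matrix.smul_apply, Matrix.sub_apply, smul_eq_mul]; ring
        rw [this]
        calc |(1 - t) * Fs i j + t * G i j| ≤ |(1 - t) * Fs i j| + |t * G i j| := abs_add_le _ _
          _ = (1 - t) * |Fs i j| + t * |G i j| := by
              rw [abs_mul, abs_mul, abs_of_nonneg (by linarith), abs_of_nonneg ht0.le]
          _ = |Fs i j| + t * (|G i j| - |Fs i j|) := by ring
      calc matrixL1Norm (Fs + t • d) ≤ ∑ i, ∑ j, (|Fs i j| + t * (|G i j| - |Fs i j|)) := by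
            apply Finset.sum_le_sum; intro i _
            apply Finset.sum_le_sum; intro j _
            exact this i j
        _ = matrixL1Norm Fs + t * (matrixL1Norm G - matrixL1Norm Fs) := by
            simp only [matrixL1Norm, Finset.sum_add_distrib, Finset.sum_sub_distrib,
              ← Finset.mul_sum]
    rw [hsum] at key
    have key2 : μ k * (∑ i, ∑ j, D i j * d i j)
        ≤ matrixL1Norm G - matrixL1Norm Fs + μ k * t / 2 * Sd := by
      have h3 := hconv
      nlinarith [key, hconv, hμk, ht0, sq_nonneg t]
    have hterm : μ k * t / 2 * Sd ≤ ε := by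
      have h1 : t ≤ 2 * ε / (μ k * (Sd + 1)) := min_le_right _ _
      have h2 : μ k * t / 2 * Sd ≤ μ k * (2 * ε / (μ k * (Sd + 1))) / 2 * Sd := by
        apply mul_le_mul_of_nonneg_right _ hSd0
        apply div_le_div_of_nonneg_right _ (by norm_num)
        exact mul_le_mul_of_nonneg_left h1 hμk.le
      have h3 : μ k * (2 * ε / (μ k * (Sd + 1))) / 2 * Sd = ε * (Sd / (Sd + 1)) := by
        field_simp
      have h4 : Sd / (Sd + 1) ≤ 1 := by
        rw [div_le_one (by linarith)]; linarith
      calc μ k * t / 2 * Sd ≤ ε * (Sd / (Sd + 1)) := by rw [← h3]; exact h2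
        _ ≤ ε * 1 := mul_le_mul_of_nonneg_left h4 hε.le
        _ = ε := mul_one ε
    have hinner : matrixInner (Y (k + 1)) d = μ k * (∑ i, ∑ j, D i j * d i j) := by
      simp only [matrixInner, hY1, Matrix.smul_apply, smul_eq_mul, Finset.mul_sum]
      apply Finset.sum_congr rfl; intro i _
      apply Finset.sum_congr rfl; intro j _
      ring
    rw [hinner]
    linarith
  refine ⟨subgrad, ?_⟩
  intro i j
  have hpert : ∀ s : ℝ, |s| = 1 →
      s * Y (k + 1) i j ≤ 1 := by
    intro s hs
    have h := subgrad (Fs + s • Matrix.single i j 1)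
    have hGF : (Fs + s • Matrix.single i j 1) - Fs = s • Matrix.single i j 1 := by
      abel
    rw [hGF] at h
    have hinner : matrixInner (Y (k + 1)) (s • Matrix.single i j 1)
        = s * Y (k + 1) i j := by
      simp only [matrixInner, Matrix.smul_apply, Matrix.single, Matrix.of_apply,
        smul_eq_mul, mul_ite, mul_one, mul_zero]
      rw [Finset.sum_eq_single i, Finset.sum_eq_single j]
      · simp [mul_comm]
      · intro b _ hb
        simp [Ne.symm hb]
      · simp
      · intro a _ ha
        apply Finset.sum_eq_zero; intro b _
        simp [Ne.symm ha]
      · simp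
    have hL1 : matrixL1Norm (Fs + s • Matrix.single i j 1)
        ≤ matrixL1Norm Fs + 1 := by
      have hbd : ∀ a b, |(Fs + s • Matrix.single i j (1:ℝ)) a b|
          ≤ |Fs a b| + |(s • Matrix.single i j (1:ℝ)) a b| := by
        intro a b
        rw [Matrix.add_apply]
        exact abs_add_le _ _
      have hsum1 : ∑ a, ∑ b, |(s • Matrix.single i j (1:ℝ)) a b| = 1 := by
        simp only [Matrix.smul_apply, Matrix.single, Matrix.of_apply, smul_eq_mul,
          mul_ite, mul_one, mul_zero, apply_ite abs, abs_zero]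
        rw [Finset.sum_eq_single i, Finset.sum_eq_single j]
        · simp [hs]
        · intro b _ hb
          simp [Ne.symm hb]
        · simp
        · intro a _ ha
          apply Finset.sum_eq_zero; intro b _
          simp [Ne.symm ha]
        · simp
      calc matrixL1Norm (Fs + s • Matrix.single i j 1)
          ≤ ∑ a, ∑ b, (|Fs a b| + |(s • Matrix.single i j (1:ℝ)) a b|) := by
            apply Finset.sum_le_sum; intro a _
            apply Finset.sum_le_sum; intro b _
            exact hbd a b
        _ = matrixL1Norm Fs + 1 := by
            simp only [Finset.sum_add_distrib]
            rw [hsum1]; rfl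
    rw [hinner] at h
    linarith
  have h1 := hpert 1 (by norm_num)
  have h2 := hpert (-1) (by norm_num)
  rw [abs_le]
  constructor <;> linarith
end

section
/- (Descent inequality for the augmented Lagrangian.) Define $L(S, F, Y, \mu) = \|F\|_1 + \langle Y, A_2 - QS - F \rangle + \frac{\mu}{2}\|A_2 - QS - F\|_F^2$ for $A_2 \in \mathbb{R}^{m\times n}$, $Q \in \mathbb{R}^{m\times k}$, and set $L_k = L(S^{(k)}, F_2^{(k)}, Y^{(k-1)}, \mu_{k-1})$. Suppose that for each $k$: (i) $S^{(k+1)}$ minimizes $S \mapsto L(S, F_2^{(k)}, Y^{(k)}, \mu_k)$; (ii) $F_2^{(k+1)}$ minimizes $F \mapsto L(S^{(k+1)}, F, Y^{(k)}, \mu_k)$; (iii) $Y^{(k)} = Y^{(k-1)} + \mu_{k-1}(A_2 - QS^{(k)} - F_2^{(k)})$. Then for all $k \ge 1$, $L_{k+1} - L_k \le \frac{\mu_k + \mu_{k-1}}{2}\,\|A_2 - Q S^{(k)} - F_2^{(k)}\|_F^2$. -/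
/-- Squared Frobenius norm of a matrix. -/
noncomputable def frobNormSq {m n : ℕ} (M : Matrix (Fin m) (Fin n) ℝ) : ℝ :=
  ∑ i, ∑ j, (M i j) ^ 2

/-- The augmented Lagrangian
`L(S, F, Y, μ) = ‖F‖₁ + ⟨Y, A₂ - QS - F⟩ + (μ/2)‖A₂ - QS - F‖_F²`. -/
noncomputable def augLag {m n p : ℕ} (A₂ : Matrix (Fin m) (Fin n) ℝ)
    (Q : Matrix (Fin m) (Fin p) ℝ) (S : Matrix (Fin p) (Fin n) ℝ)
    (F Y : Matrix (Fin m) (Fin n) ℝ) (μ : ℝ) : ℝ :=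
  matrixL1Norm F + matrixInner Y (A₂ - Q * S - F) + μ / 2 * frobNormSq (A₂ - Q * S - F)

/-- Descent inequality for the augmented Lagrangian of ALM:
`L_{k+1} - L_k ≤ ((μₖ + μ_{k-1})/2) ‖A₂ - Q S⁽ᵏ⁾ - F₂⁽ᵏ⁾‖_F²`. -/
theorem alm_descent_inequality (m n p : ℕ)
    (A₂ : Matrix (Fin m) (Fin n) ℝ) (Q : Matrix (Fin m) (Fin p) ℝ)
    (S : ℕ → Matrix (Fin p) (Fin n) ℝ)
    (F₂ Y : ℕ → Matrix (Fin m) (Fin n) ℝ)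
    (μ : ℕ → ℝ) (hμ : ∀ k, 0 < μ k)
    (hS : ∀ k, ∀ S' : Matrix (Fin p) (Fin n) ℝ,
      augLag A₂ Q (S (k + 1)) (F₂ k) (Y k) (μ k) ≤ augLag A₂ Q S' (F₂ k) (Y k) (μ k))
    (hF : ∀ k, ∀ F' : Matrix (Fin m) (Fin n) ℝ,
      augLag A₂ Q (S (k + 1)) (F₂ (k + 1)) (Y k) (μ k) ≤
        augLag A₂ Q (S (k + 1)) F' (Y k) (μ k))
    (hYupd : ∀ k ≥ 1, Y k = Y (k - 1) + μ (k - 1) • (A₂ - Q * S k - F₂ k)) :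
    ∀ k ≥ 1,
      augLag A₂ Q (S (k + 1)) (F₂ (k + 1)) (Y k) (μ k) -
          augLag A₂ Q (S k) (F₂ k) (Y (k - 1)) (μ (k - 1)) ≤
        (μ k + μ (k - 1)) / 2 * frobNormSq (A₂ - Q * S k - F₂ k) := by

  intro k hk
  have key : ∀ (A B : Matrix (Fin m) (Fin n) ℝ) (c : ℝ),
      matrixInner (A + c • B) B = matrixInner A B + c * frobNormSq B := by
    intro A B c
    simp [matrixInner, frobNormSq, Finset.mul_sum, Finset.sum_add_distrib,
      add_mul, sq, mul_assoc]
  have h1 := hF k (F₂ k)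
  have h2 := hS k (S k)
  have h3 : augLag A₂ Q (S (k + 1)) (F₂ (k + 1)) (Y k) (μ k) ≤
      augLag A₂ Q (S k) (F₂ k) (Y k) (μ k) := le_trans h1 h2
  have hY := hYupd k hk
  set R := A₂ - Q * S k - F₂ k with hR
  have h4 : augLag A₂ Q (S k) (F₂ k) (Y k) (μ k) -
      augLag A₂ Q (S k) (F₂ k) (Y (k - 1)) (μ (k - 1)) =
      (μ k + μ (k - 1)) / 2 * frobNormSq R := by
    simp only [augLag, ← hR, hY, key]
    ring
  linarith
end

section
/- Under the hypotheses of the augmented-Lagrangian descent inequality (subproblem optimality of $S^{(k+1)}$ and $F_2^{(k+1)}$, and multiplier update $Y^{(k)} = Y^{(k-1)} + \mu_{k-1}(A_2 - QS^{(k)} - F_2^{(k)})$), together with the penalty update $\mu_k = \rho\, \mu_{k-1}$ for a fixed $\rho > 1$, one has for all $k \ge 1$: $L_{k+1} - L_k \le \frac{1+\rho}{\mu_{k-1}}\,\|Y^{(k)} - Y^{(k-1)}\|_F^2$. -/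

lemma inner_sub_left' {m n : ℕ} (X Y Z : Matrix (Fin m) (Fin n) ℝ) :
    matrixInner (X - Y) Z = matrixInner X Z - matrixInner Y Z := by
  simp [matrixInner, sub_mul, Finset.sum_sub_distrib]

lemma inner_smul_left' {m n : ℕ} (c : ℝ) (X Z : Matrix (Fin m) (Fin n) ℝ) :
    matrixInner (c • X) Z = c * matrixInner X Z := by
  simp [matrixInner, Finset.mul_sum, mul_assoc]

lemma frob_eq_inner' {m n : ℕ} (X : Matrix (Fin m) (Fin n) ℝ) :
    frobNormSq X = matrixInner X X := by
  simp [frobNormSq, matrixInner, sq]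

lemma frob_nonneg' {m n : ℕ} (X : Matrix (Fin m) (Fin n) ℝ) : 0 ≤ frobNormSq X := by
  unfold frobNormSq; positivity

lemma frob_smul' {m n : ℕ} (c : ℝ) (X : Matrix (Fin m) (Fin n) ℝ) :
    frobNormSq (c • X) = c ^ 2 * frobNormSq X := by
  simp [frobNormSq, Finset.mul_sum, mul_pow]

/-- Descent inequality for the augmented Lagrangian of ALM with geometric penalty
update `μₖ = ρ μ_{k-1}`, `ρ > 1`:
`L_{k+1} - L_k ≤ ((1 + ρ)/μ_{k-1}) ‖Y⁽ᵏ⁾ - Y⁽ᵏ⁻¹⁾‖_F²`. -/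
theorem alm_descent_inequality_geometric (m n p : ℕ)
    (A₂ : Matrix (Fin m) (Fin n) ℝ) (Q : Matrix (Fin m) (Fin p) ℝ)
    (S : ℕ → Matrix (Fin p) (Fin n) ℝ)
    (F₂ Y : ℕ → Matrix (Fin m) (Fin n) ℝ)
    (μ : ℕ → ℝ) (hμ : ∀ k, 0 < μ k)
    (hS : ∀ k, ∀ S' : Matrix (Fin p) (Fin n) ℝ,
      augLag A₂ Q (S (k + 1)) (F₂ k) (Y k) (μ k) ≤ augLag A₂ Q S' (F₂ k) (Y k) (μ k))
    (hF : ∀ k, ∀ F' : Matrix (Fin m) (Fin n) ℝ,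
      augLag A₂ Q (S (k + 1)) (F₂ (k + 1)) (Y k) (μ k) ≤
        augLag A₂ Q (S (k + 1)) F' (Y k) (μ k))
    (hYupd : ∀ k ≥ 1, Y k = Y (k - 1) + μ (k - 1) • (A₂ - Q * S k - F₂ k))
    (ρ : ℝ) (hρ : 1 < ρ) (hμupd : ∀ k ≥ 1, μ k = ρ * μ (k - 1)) :
    ∀ k ≥ 1,
      augLag A₂ Q (S (k + 1)) (F₂ (k + 1)) (Y k) (μ k) -
          augLag A₂ Q (S k) (F₂ k) (Y (k - 1)) (μ (k - 1)) ≤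
        (1 + ρ) / μ (k - 1) * frobNormSq (Y k - Y (k - 1)) := by
  intro k hk
  set R := A₂ - Q * S k - F₂ k with hR
  have hY := hYupd k hk
  have hD : Y k - Y (k - 1) = μ (k - 1) • R := by rw [hY]; abel
  have hμk := hμupd k hk
  have hμpos := hμ (k - 1)
  have hfR : (0:ℝ) ≤ frobNormSq R := frob_nonneg' R
  have h1 : augLag A₂ Q (S (k + 1)) (F₂ (k + 1)) (Y k) (μ k) ≤
      augLag A₂ Q (S k) (F₂ k) (Y k) (μ k) := (hF k (F₂ k)).trans (hS k (S k))
  have hinner : matrixInner (Y k) R - matrixInner (Y (k - 1)) R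
      = μ (k - 1) * frobNormSq R := by
    rw [← inner_sub_left', hD, inner_smul_left', frob_eq_inner']
  have hfrobD : frobNormSq (Y k - Y (k - 1)) = μ (k - 1) ^ 2 * frobNormSq R := by
    rw [hD, frob_smul']
  have hrhs : (1 + ρ) / μ (k - 1) * frobNormSq (Y k - Y (k - 1))
      = (1 + ρ) * μ (k - 1) * frobNormSq R := by
    rw [hfrobD]; field_simp
  have h2 : augLag A₂ Q (S k) (F₂ k) (Y k) (μ k) -
      augLag A₂ Q (S k) (F₂ k) (Y (k - 1)) (μ (k - 1)) ≤
      (1 + ρ) * μ (k - 1) * frobNormSq R := by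
    unfold augLag
    rw [← hR, hμk]
    nlinarith [mul_nonneg hμpos.le hfR, hinner]
  rw [hrhs]
  linarith
end

section
/- (Objective gap of ALM.) Let $A_2 \in \mathbb{R}^{m \times n}$, $Q \in \mathbb{R}^{m \times k}$, and let $f^* = \inf\{\|F_2\|_1 : S \in \mathbb{R}^{k \times n},\, F_2 \in \mathbb{R}^{m \times n},\, A_2 = QS + F_2\}$. Suppose the iterates satisfy the multiplier update $Y^{(k)} = Y^{(k-1)} + \mu_{k-1}(A_2 - Q S^{(k)} - F_2^{(k)})$ with $\mu_{k-1} > 0$. Then for every $k \ge 1$: $f^* - \|F_2^{(k)}\|_1 \le \frac{1}{\mu_{k-1}}\, \|Y^{(k)} - Y^{(k-1)}\|_1$. In particular, if the multipliers $Y^{(k)}$ are bounded (in the entrywise $\ell_1$ norm) by a constant, then $f^* - \|F_2^{(k)}\|_1 \le O(1/\mu_{k-1})$. -/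
lemma matrixL1Norm_nonneg {m n : ℕ} (M : Matrix (Fin m) (Fin n) ℝ) :
    0 ≤ matrixL1Norm M := by
  refine Finset.sum_nonneg fun i _ => Finset.sum_nonneg fun j _ => abs_nonneg _

lemma matrixL1Norm_sub_le {m n : ℕ} (X F : Matrix (Fin m) (Fin n) ℝ) :
    matrixL1Norm X - matrixL1Norm F ≤ matrixL1Norm (X - F) := by
  unfold matrixL1Norm
  rw [← Finset.sum_sub_distrib]
  refine Finset.sum_le_sum fun i _ => ?_
  rw [← Finset.sum_sub_distrib]
  refine Finset.sum_le_sum fun j _ => ?_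
  simpa [Matrix.sub_apply] using abs_sub_abs_le_abs_sub (X i j) (F i j)

lemma matrixL1Norm_smul {m n : ℕ} (c : ℝ) (M : Matrix (Fin m) (Fin n) ℝ) :
    matrixL1Norm (c • M) = |c| * matrixL1Norm M := by
  unfold matrixL1Norm
  simp [Matrix.smul_apply, abs_mul, Finset.mul_sum]

lemma matrixL1Norm_sub_le' {m n : ℕ} (X F : Matrix (Fin m) (Fin n) ℝ) :
    matrixL1Norm (X - F) ≤ matrixL1Norm X + matrixL1Norm F := by
  unfold matrixL1Norm
  rw [← Finset.sum_add_distrib]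
  refine Finset.sum_le_sum fun i _ => ?_
  rw [← Finset.sum_add_distrib]
  refine Finset.sum_le_sum fun j _ => ?_
  simpa [Matrix.sub_apply] using abs_sub (X i j) (F i j)

/-- Objective gap of ALM: with `f⋆` the optimal value of
`min ‖F₂‖₁ s.t. A₂ = QS + F₂`, the multiplier update
`Y⁽ᵏ⁾ = Y⁽ᵏ⁻¹⁾ + μ_{k-1}(A₂ - Q S⁽ᵏ⁾ - F₂⁽ᵏ⁾)` gives
`f⋆ - ‖F₂⁽ᵏ⁾‖₁ ≤ (1/μ_{k-1})‖Y⁽ᵏ⁾ - Y⁽ᵏ⁻¹⁾‖₁`; in particular, if the multipliers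
are bounded by `C` in the entrywise ℓ1 norm, then
`f⋆ - ‖F₂⁽ᵏ⁾‖₁ ≤ 2C/μ_{k-1}`. -/
theorem alm_objective_gap (m n p : ℕ)
    (A₂ : Matrix (Fin m) (Fin n) ℝ) (Q : Matrix (Fin m) (Fin p) ℝ)
    (S : ℕ → Matrix (Fin p) (Fin n) ℝ)
    (F₂ Y : ℕ → Matrix (Fin m) (Fin n) ℝ)
    (μ : ℕ → ℝ) (hμ : ∀ k, 0 < μ k)
    (hYupd : ∀ k ≥ 1, Y k = Y (k - 1) + μ (k - 1) • (A₂ - Q * S k - F₂ k)) :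
    (∀ k ≥ 1,
      sInf {c : ℝ | ∃ (S' : Matrix (Fin p) (Fin n) ℝ)
            (F' : Matrix (Fin m) (Fin n) ℝ),
          A₂ = Q * S' + F' ∧ c = matrixL1Norm F'} -
          matrixL1Norm (F₂ k) ≤
        (μ (k - 1))⁻¹ * matrixL1Norm (Y k - Y (k - 1))) ∧
    (∀ C : ℝ, 0 < C → (∀ k, matrixL1Norm (Y k) ≤ C) →
      ∀ k ≥ 1,
        sInf {c : ℝ | ∃ (S' : Matrix (Fin p) (Fin n) ℝ)
              (F' : Matrix (Fin m) (Fin n) ℝ),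
            A₂ = Q * S' + F' ∧ c = matrixL1Norm F'} -
            matrixL1Norm (F₂ k) ≤
          2 * C / μ (k - 1)) := by
  have key : ∀ k ≥ 1,
      sInf {c : ℝ | ∃ (S' : Matrix (Fin p) (Fin n) ℝ)
            (F' : Matrix (Fin m) (Fin n) ℝ),
          A₂ = Q * S' + F' ∧ c = matrixL1Norm F'} -
          matrixL1Norm (F₂ k) ≤
        (μ (k - 1))⁻¹ * matrixL1Norm (Y k - Y (k - 1)) := by
    intro k hk
    have hbdd : BddBelow {c : ℝ | ∃ (S' : Matrix (Fin p) (Fin n) ℝ)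
          (F' : Matrix (Fin m) (Fin n) ℝ),
        A₂ = Q * S' + F' ∧ c = matrixL1Norm F'} := by
      refine ⟨0, fun c hc => ?_⟩
      obtain ⟨S', F', _, rfl⟩ := hc
      exact matrixL1Norm_nonneg _
    have hmem : matrixL1Norm (A₂ - Q * S k) ∈
        {c : ℝ | ∃ (S' : Matrix (Fin p) (Fin n) ℝ)
            (F' : Matrix (Fin m) (Fin n) ℝ),
          A₂ = Q * S' + F' ∧ c = matrixL1Norm F'} :=
      ⟨S k, A₂ - Q * S k, by abel, rfl⟩
    have h1 := csInf_le hbdd hmem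
    have hY : Y k - Y (k - 1) = μ (k - 1) • (A₂ - Q * S k - F₂ k) := by
      rw [hYupd k hk]; abel
    have hnorm : matrixL1Norm (Y k - Y (k - 1))
        = μ (k - 1) * matrixL1Norm (A₂ - Q * S k - F₂ k) := by
      rw [hY, matrixL1Norm_smul, abs_of_pos (hμ _)]
    have htri := matrixL1Norm_sub_le (A₂ - Q * S k) (F₂ k)
    have hpos := hμ (k - 1)
    rw [hnorm, inv_mul_cancel_left₀ (ne_of_gt hpos)]
    linarith
  refine ⟨key, fun C hC hbound k hk => ?_⟩
  have h1 := key k hk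
  have h2 : matrixL1Norm (Y k - Y (k - 1)) ≤ 2 * C := by
    have := matrixL1Norm_sub_le' (Y k) (Y (k - 1))
    have hb1 := hbound k
    have hb2 := hbound (k - 1)
    linarith
  have hpos := hμ (k - 1)
  calc _ ≤ (μ (k - 1))⁻¹ * matrixL1Norm (Y k - Y (k - 1)) := h1
    _ ≤ (μ (k - 1))⁻¹ * (2 * C) := by
        exact mul_le_mul_of_nonneg_left h2 (le_of_lt (inv_pos.mpr hpos))
    _ = 2 * C / μ (k - 1) := by field_simp
end
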